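/- Let m ≥ 1, let h ∈ 𝒮(ℝᵐ×ℝᵐ; ℂ) be a Schwartz function, and let g be a linear transformation of ℝᵐ such that g − 1 is invertible. Then lim_{ℏ → 0⁺} ℏ^{−m} ∫_{ℝᵐ} ĥ(v, ((g−1)v)/ℏ) dv = (2π)ᵐ · h(0,0) / |det(g − 1)|, where ĥ(x,y) = ∫_{ℝᵐ} h(x,ξ) e^{−i⟨y,ξ⟩} dξ is the Fourier transform of h in the second variable. -/

import Mathlib

/-!
After the substitution `v = ℏ w` the quantity becomes `∫ ĥ(ℏ w, (g - 1) w) dw`. For fixed `x`,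
`ĥ(x, ·)` is a rescaled Fourier transform of the slice `h(x, ·)`, a Schwartz function whose
seminorms are bounded by those of `h`; continuity of the Fourier transform on Schwartz space then
gives `‖ĥ(x, y)‖ ≤ φ y` with `φ` integrable and independent of `x`. Dominated convergence lets
`ℏ → 0`, the linear substitution `u = (g - 1) w` produces the factor `|det (g - 1)|⁻¹`, and Fourier
inversion at the origin gives `∫ ĥ(0, u) du = (2π)ᵐ h(0, 0)`.
-/

open MeasureTheory RealInnerProductSpace Filter

/-- Fourier transform in the second variable:
`ĥ(x,y) = ∫ h(x,ξ) e^{−i⟨y,ξ⟩} dξ`. -/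
noncomputable def fhat {m : ℕ}
    (h : EuclideanSpace ℝ (Fin m) × EuclideanSpace ℝ (Fin m) → ℂ)
    (x y : EuclideanSpace ℝ (Fin m)) : ℂ :=
  ∫ ξ : EuclideanSpace ℝ (Fin m),
    h (x, ξ) * Complex.exp (-(Complex.I * ((⟪y, ξ⟫ : ℝ) : ℂ)))

open Module Topology
open scoped ContDiff FourierTransform SchwartzMap

namespace SchwartzMap

variable {D E F : Type*} [NormedAddCommGroup D] [NormedSpace ℝ D] [NormedAddCommGroup E]
  [NormedSpace ℝ E] [NormedAddCommGroup F] [NormedSpace ℝ F]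

theorem norm_iteratedFDeriv_comp_prodMk_le (f : 𝓢(D × E, F)) (x : D) (n : ℕ) (y : E) :
    ‖iteratedFDeriv ℝ n (fun y ↦ f (x, y)) y‖ ≤ ‖iteratedFDeriv ℝ n f (x, y)‖ := by
  let L := ContinuousLinearMap.inr ℝ D E
  have hshift : (fun y ↦ f (x, y)) = (fun p ↦ f ((x, 0) + p)) ∘ L := by
    ext y; simp [L]
  have hsmooth : ContDiff ℝ ∞ (fun p ↦ f ((x, 0) + p)) :=
    (f.smooth ⊤).comp (contDiff_const.add contDiff_id)
  rw [hshift, L.iteratedFDeriv_comp_right hsmooth _ (mod_cast le_top),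
    iteratedFDeriv_comp_add_left]
  calc _ ≤ ‖iteratedFDeriv ℝ n f ((x, 0) + L y)‖ * ∏ _ : Fin n, ‖L‖ :=
        ContinuousMultilinearMap.norm_compContinuousLinearMap_le _ _
    _ ≤ ‖iteratedFDeriv ℝ n f ((x, 0) + L y)‖ * 1 := by
        gcongr
        exact Finset.prod_le_one (fun _ _ ↦ norm_nonneg _)
          (fun _ _ ↦ ContinuousLinearMap.norm_inr_le_one ℝ D E)
    _ = ‖iteratedFDeriv ℝ n f (x, y)‖ := by simp [L]

theorem pow_mul_norm_iteratedFDeriv_comp_prodMk_le (𝕜 : Type*) [NormedField 𝕜]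
    [NormedSpace 𝕜 F] [SMulCommClass ℝ 𝕜 F] (f : 𝓢(D × E, F)) (x : D) (k n : ℕ) (y : E) :
    ‖y‖ ^ k * ‖iteratedFDeriv ℝ n (fun y ↦ f (x, y)) y‖ ≤ SchwartzMap.seminorm 𝕜 k n f :=
  calc ‖y‖ ^ k * ‖iteratedFDeriv ℝ n (fun y ↦ f (x, y)) y‖
      ≤ ‖(x, y)‖ ^ k * ‖iteratedFDeriv ℝ n f (x, y)‖ := by
        gcongr
        · exact norm_snd_le (x, y)
        · exact norm_iteratedFDeriv_comp_prodMk_le f x n y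
    _ ≤ _ := le_seminorm 𝕜 k n f (x, y)

noncomputable def sliceRight (f : 𝓢(D × E, F)) (x : D) : 𝓢(E, F) where
  toFun y := f (x, y)
  smooth' := (f.smooth ⊤).comp (contDiff_const.prodMk contDiff_id)
  decay' k n := ⟨_, pow_mul_norm_iteratedFDeriv_comp_prodMk_le ℝ f x k n⟩

@[simp]
theorem sliceRight_apply (f : 𝓢(D × E, F)) (x : D) (y : E) : f.sliceRight x y = f (x, y) := rfl

theorem seminorm_sliceRight_le (𝕜 : Type*) [NormedField 𝕜] [NormedSpace 𝕜 F]
    [SMulCommClass ℝ 𝕜 F] (f : 𝓢(D × E, F)) (x : D) (k n : ℕ) :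
    SchwartzMap.seminorm 𝕜 k n (f.sliceRight x) ≤ SchwartzMap.seminorm 𝕜 k n f :=
  seminorm_le_bound 𝕜 k n _ (apply_nonneg _ _)
    (pow_mul_norm_iteratedFDeriv_comp_prodMk_le 𝕜 f x k n)

theorem exists_one_add_norm_pow_mul_le_sliceRight {E' F' : Type*} [NormedAddCommGroup E']
    [NormedSpace ℝ E'] [NormedAddCommGroup F'] [NormedSpace ℝ F'] (L : 𝓢(E, F) →L[ℝ] 𝓢(E', F'))
    (f : 𝓢(D × E, F)) (k : ℕ) :
    ∃ C, ∀ x y, (1 + ‖y‖) ^ k * ‖L (f.sliceRight x) y‖ ≤ C := by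
  let q := (Finset.Iic (k, 0)).sup (schwartzSeminormFamily ℝ E' F')
  have hq : Continuous (q.comp L.toLinearMap) :=
    ((schwartz_withSeminorms ℝ E' F').partial_sups.continuous_seminorm (k, 0)).comp L.continuous
  obtain ⟨s, C, -, hC⟩ := Seminorm.bound_of_continuous (schwartz_withSeminorms ℝ E F) _ hq
  refine ⟨2 ^ k * (C * s.sup (schwartzSeminormFamily ℝ (D × E) F) f), fun x y ↦ ?_⟩
  have hslice : s.sup (schwartzSeminormFamily ℝ E F) (f.sliceRight x) ≤
      s.sup (schwartzSeminormFamily ℝ (D × E) F) f :=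
    Seminorm.finset_sup_apply_le (apply_nonneg _ _) fun i hi ↦
      (seminorm_sliceRight_le ℝ f x i.1 i.2).trans
        (Seminorm.le_finset_sup_apply (p := schwartzSeminormFamily ℝ (D × E) F) hi)
  calc (1 + ‖y‖) ^ k * ‖L (f.sliceRight x) y‖
      ≤ 2 ^ k * q (L (f.sliceRight x)) := by
        have := one_add_le_sup_seminorm_apply (𝕜 := ℝ) (m := (k, 0)) le_rfl le_rfl
          (L (f.sliceRight x)) y
        rwa [norm_iteratedFDeriv_zero] at this
    _ ≤ 2 ^ k * (C * s.sup (schwartzSeminormFamily ℝ E F) (f.sliceRight x)) := by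
        gcongr; exact hC _
    _ ≤ _ := by gcongr

variable {V G : Type*} [NormedAddCommGroup V] [InnerProductSpace ℝ V] [FiniteDimensional ℝ V]
  [MeasurableSpace V] [BorelSpace V] [NormedAddCommGroup G] [NormedSpace ℂ G] [CompleteSpace G]

theorem integral_fourier (f : 𝓢(V, G)) : ∫ w, 𝓕 f w = f 0 := by
  have hinv : 𝓕⁻ (𝓕 f) 0 = ∫ w, 𝓕 f w := by
    rw [fourierInv_coe, Real.fourierInv_eq]
    simp
  rw [← hinv, FourierPair.fourierInv_fourier_eq]

end SchwartzMap

namespace MeasureTheory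

variable {E G : Type*} [NormedAddCommGroup E] [NormedSpace ℝ E] [FiniteDimensional ℝ E]
  [MeasurableSpace E] [BorelSpace E] (μ : Measure E) [NormedAddCommGroup G]

theorem tendsto_integral_comp_smul_prodMk_nhds_zero [NormedSpace ℝ G] {F : E × E → G}
    (hF : Continuous F) {φ : E → ℝ} (hφ : Integrable φ μ) (hFφ : ∀ x y, ‖F (x, y)‖ ≤ φ y) :
    Tendsto (fun t : ℝ ↦ ∫ y, F (t • y, y) ∂μ) (𝓝 0) (𝓝 (∫ y, F (0, y) ∂μ)) := by
  refine tendsto_integral_filter_of_dominated_convergence φ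
    (.of_forall fun t ↦
      (hF.comp ((continuous_const_smul t).prodMk continuous_id)).aestronglyMeasurable)
    (.of_forall fun t ↦ .of_forall fun y ↦ hFφ _ _) hφ (.of_forall fun y ↦ ?_)
  have hcont : Continuous fun t : ℝ ↦ F (t • y, y) :=
    hF.comp ((continuous_id.smul continuous_const).prodMk continuous_const)
  simpa using hcont.tendsto 0

variable [μ.IsAddHaarMeasure]

theorem exists_integrable_bound_of_one_add_norm_pow_mul_le {ι : Type*} {u : ι → E → G}
    {k : ℕ} (hk : finrank ℝ E < k) {C : ℝ} (hC : ∀ i y, (1 + ‖y‖) ^ k * ‖u i y‖ ≤ C) :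
    ∃ φ : E → ℝ, Integrable φ μ ∧ ∀ i y, ‖u i y‖ ≤ φ y := by
  refine ⟨fun y ↦ C * (1 + ‖y‖) ^ (-(k : ℝ)),
    (integrable_one_add_norm (by exact_mod_cast hk)).const_mul C, fun i y ↦ ?_⟩
  dsimp only
  rw [Real.rpow_neg (by positivity), Real.rpow_natCast, ← div_eq_mul_inv,
    le_div_iff₀ (by positivity), mul_comm]
  exact hC i y

theorem measurableEmbedding_linearMap_of_det_ne_zero {T : E →ₗ[ℝ] E}
    (hT : LinearMap.det T ≠ 0) : MeasurableEmbedding T :=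
  (T.equivOfDetNeZero hT).toContinuousLinearEquiv.toHomeomorph.measurableEmbedding

theorem integral_comp_linearMap [NormedSpace ℝ G] {T : E →ₗ[ℝ] E} (hT : LinearMap.det T ≠ 0)
    (f : E → G) : ∫ x, f (T x) ∂μ = |LinearMap.det T|⁻¹ • ∫ y, f y ∂μ := by
  rw [← (measurableEmbedding_linearMap_of_det_ne_zero hT).integral_map,
    Measure.map_linearMap_addHaar_eq_smul_addHaar μ hT, integral_smul_measure,
    ENNReal.toReal_ofReal (abs_nonneg _), abs_inv]

theorem Integrable.comp_linearMap {φ : E → G} (hφ : Integrable φ μ) {T : E →ₗ[ℝ] E}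
    (hT : LinearMap.det T ≠ 0) : Integrable (φ ∘ T) μ := by
  rw [← (measurableEmbedding_linearMap_of_det_ne_zero hT).integrable_map_iff,
    Measure.map_linearMap_addHaar_eq_smul_addHaar μ hT]
  exact hφ.smul_measure ENNReal.ofReal_ne_top

theorem inv_pow_smul_integral_comp_inv_smul [NormedSpace ℝ G] (T : E →ₗ[ℝ] E) (F : E × E → G)
    {t : ℝ} (ht : 0 < t) :
    (t ^ finrank ℝ E)⁻¹ • ∫ v, F (v, t⁻¹ • T v) ∂μ = ∫ w, F (t • w, T w) ∂μ := by
  have hsubst : (fun v ↦ F (v, t⁻¹ • T v)) = fun v ↦ (fun w ↦ F (t • w, T w)) (t⁻¹ • v) := by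
    ext v; simp [smul_smul, ht.ne']
  rw [hsubst, Measure.integral_comp_inv_smul_of_nonneg μ (fun w ↦ F (t • w, T w)) ht.le,
    smul_smul, inv_mul_cancel₀ (pow_ne_zero _ ht.ne'), one_smul]

theorem tendsto_inv_pow_smul_integral_comp_inv_smul [NormedSpace ℝ G] {F : E × E → G}
    (hF : Continuous F) {φ : E → ℝ} (hφ : Integrable φ μ) (hFφ : ∀ x y, ‖F (x, y)‖ ≤ φ y)
    {T : E →ₗ[ℝ] E} (hT : LinearMap.det T ≠ 0) :
    Tendsto (fun t : ℝ ↦ (t ^ finrank ℝ E)⁻¹ • ∫ v, F (v, t⁻¹ • T v) ∂μ) (𝓝[>] 0)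
      (𝓝 (|LinearMap.det T|⁻¹ • ∫ u, F (0, u) ∂μ)) := by
  rw [← integral_comp_linearMap μ hT fun u ↦ F (0, u)]
  have hlim := tendsto_integral_comp_smul_prodMk_nhds_zero μ (F := fun p ↦ F (p.1, T p.2))
    (hF.comp (continuous_fst.prodMk (T.continuous_of_finiteDimensional.comp continuous_snd)))
    (hφ.comp_linearMap μ hT) fun x y ↦ hFφ x (T y)
  refine (hlim.mono_left nhdsWithin_le_nhds).congr' ?_
  filter_upwards [self_mem_nhdsWithin] with t ht
  exact (inv_pow_smul_integral_comp_inv_smul μ T F ht).symm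

end MeasureTheory

section FourierSlice

open Real

variable {m : ℕ} (h : 𝓢(EuclideanSpace ℝ (Fin m) × EuclideanSpace ℝ (Fin m), ℂ))

/-- Mathlib's `𝓕` uses the kernel `e^{-2πi⟨x, ξ⟩}`, hence the rescaling by `2π`. -/
theorem fhat_eq_fourier_sliceRight (x y : EuclideanSpace ℝ (Fin m)) :
    fhat ⇑h x y = 𝓕 (h.sliceRight x) ((2 * π)⁻¹ • y) := by
  rw [SchwartzMap.fourier_coe, Real.fourier_eq']
  refine integral_congr_ae (.of_forall fun ξ ↦ ?_)
  simp only [SchwartzMap.sliceRight_apply, real_inner_smul_right, real_inner_comm ξ y,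
    smul_eq_mul]
  rw [mul_comm]
  congr 2
  push_cast
  field_simp

theorem exists_integrable_bound_fhat :
    ∃ φ : EuclideanSpace ℝ (Fin m) → ℝ, Integrable φ ∧ ∀ x y, ‖fhat ⇑h x y‖ ≤ φ y := by
  obtain ⟨C, hC⟩ := SchwartzMap.exists_one_add_norm_pow_mul_le_sliceRight
    (FourierTransform.fourierCLM ℝ 𝓢(EuclideanSpace ℝ (Fin m), ℂ)) h (m + 1)
  obtain ⟨φ, hφ, hφ_bound⟩ := exists_integrable_bound_of_one_add_norm_pow_mul_le volume
    (by rw [finrank_euclideanSpace_fin]; omega) hC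
  refine ⟨fun y ↦ φ ((2 * π)⁻¹ • y), hφ.comp_smul (by positivity), fun x y ↦ ?_⟩
  rw [fhat_eq_fourier_sliceRight]
  exact hφ_bound x _

theorem continuous_fhat :
    Continuous fun p : EuclideanSpace ℝ (Fin m) × EuclideanSpace ℝ (Fin m) ↦ fhat ⇑h p.1 p.2 := by
  obtain ⟨C, hC⟩ := SchwartzMap.exists_one_add_norm_pow_mul_le_sliceRight
    (ContinuousLinearMap.id ℝ _) h (m + 1)
  obtain ⟨φ, hφ, hφ_bound⟩ := exists_integrable_bound_of_one_add_norm_pow_mul_le volume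
    (by rw [finrank_euclideanSpace_fin]; omega) hC
  have hexp (y ξ : EuclideanSpace ℝ (Fin m)) :
      ‖Complex.exp (-(Complex.I * ((⟪y, ξ⟫ : ℝ) : ℂ)))‖ = 1 := by
    rw [Complex.norm_exp]
    simp
  refine continuous_of_dominated (bound := φ) (fun p ↦ ?_) (fun p ↦ .of_forall fun ξ ↦ ?_) hφ
    (.of_forall fun ξ ↦ by fun_prop)
  · exact Continuous.aestronglyMeasurable (by fun_prop)
  · rw [norm_mul, hexp, mul_one]
    exact hφ_bound p.1 ξ

theorem integral_fhat_zero : ∫ u, fhat ⇑h 0 u = (2 * π) ^ m • h (0, 0) := by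
  simp_rw [fhat_eq_fourier_sliceRight]
  rw [Measure.integral_comp_inv_smul_of_nonneg volume
      ⇑(𝓕 (h.sliceRight 0) : 𝓢(EuclideanSpace ℝ (Fin m), ℂ)) (by positivity),
    finrank_euclideanSpace_fin, SchwartzMap.integral_fourier, SchwartzMap.sliceRight_apply]

end FourierSlice

theorem statement8_general (m : ℕ)
    (h : SchwartzMap (EuclideanSpace ℝ (Fin m) × EuclideanSpace ℝ (Fin m)) ℂ)
    (g : EuclideanSpace ℝ (Fin m) →ₗ[ℝ] EuclideanSpace ℝ (Fin m))
    (hg : IsUnit (g - LinearMap.id)) :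
    Tendsto
      (fun ℏ : ℝ => ((ℏ ^ m : ℝ) : ℂ)⁻¹ *
        ∫ v : EuclideanSpace ℝ (Fin m), fhat ⇑h v (ℏ⁻¹ • (g v - v)))
      (nhdsWithin 0 (Set.Ioi 0))
      (nhds ((((2 * Real.pi) ^ m / |LinearMap.det (g - LinearMap.id)| : ℝ) : ℂ) *
        h (0, 0))) := by
  obtain ⟨φ, hφ, hφ_bound⟩ := exists_integrable_bound_fhat h
  have hdet : LinearMap.det (g - LinearMap.id) ≠ 0 := (hg.map LinearMap.det).ne_zero
  have hlim := tendsto_inv_pow_smul_integral_comp_inv_smul volume (continuous_fhat h) hφ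
    hφ_bound hdet
  rw [integral_fhat_zero, finrank_euclideanSpace_fin] at hlim
  convert hlim using 2 with t
  · simp [Complex.real_smul]
  · simp [Complex.real_smul, div_eq_inv_mul, mul_assoc]

/-- Let `m ≥ 1`, `h ∈ 𝒮(ℝᵐ×ℝᵐ; ℂ)`, and let `g` be a linear
transformation of `ℝᵐ` such that `g − 1` is invertible.  Then
`lim_{ℏ → 0⁺} ℏ^{−m} ∫ ĥ(v, ((g−1)v)/ℏ) dv = (2π)ᵐ · h(0,0) / |det(g − 1)|`. -/
theorem statement8 (m : ℕ) (hm : 1 ≤ m)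
    (h : SchwartzMap (EuclideanSpace ℝ (Fin m) × EuclideanSpace ℝ (Fin m)) ℂ)
    (g : EuclideanSpace ℝ (Fin m) →ₗ[ℝ] EuclideanSpace ℝ (Fin m))
    (hg : IsUnit (g - LinearMap.id)) :
    Tendsto
      (fun ℏ : ℝ => ((ℏ ^ m : ℝ) : ℂ)⁻¹ *
        ∫ v : EuclideanSpace ℝ (Fin m), fhat ⇑h v (ℏ⁻¹ • (g v - v)))
      (nhdsWithin 0 (Set.Ioi 0))
      (nhds ((((2 * Real.pi) ^ m / |LinearMap.det (g - LinearMap.id)| : ℝ) : ℂ) *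
        h (0, 0))) :=
  statement8_general m h g hg
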